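/- arXiv:2310.20069 — 5 statements merged into one kernel-verified Lean document; each statement's English description precedes it below -/
import Mathlib

section
/- Let T be a type and P a nonempty collection of subsets of T that is closed under complementation and under binary intersection (a field of sets on T). Then in the topology generated by P, for every collection Z of subsets of T, the set ⊔Z = ⋂{Y ∈ P : ⋃Z ⊆ Y} is the closure of ⋃Z. -/
open Set TopologicalSpace

theorem univ_mem_of_compl_mem_of_inter_mem {T : Type*} {P : Set (Set T)} (hne : P.Nonempty)
    (hcompl : ∀ Y ∈ P, Yᶜ ∈ P) (hinter : ∀ Y ∈ P, ∀ W ∈ P, Y ∩ W ∈ P) : univ ∈ P := by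
  obtain ⟨A, hA⟩ := hne
  simpa using hcompl _ (hinter _ hA _ (hcompl _ hA))

theorem isTopologicalBasis_generateFrom_of_inter_mem {T : Type*} {P : Set (Set T)}
    (huniv : univ ∈ P) (hinter : ∀ Y ∈ P, ∀ W ∈ P, Y ∩ W ∈ P) :
    @IsTopologicalBasis T (generateFrom P) P := by
  let _ : TopologicalSpace T := generateFrom P
  simpa [insert_eq_of_mem huniv] using
    isTopologicalBasis_of_subbasis_of_inter rfl fun _ hY _ hW ↦ hinter _ hY _ hW

theorem TopologicalSpace.IsTopologicalBasis.closure_eq_sInter_of_compl_mem {T : Type*}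
    [TopologicalSpace T] {B : Set (Set T)} (hB : IsTopologicalBasis B) (hcompl : ∀ Y ∈ B, Yᶜ ∈ B) (s : Set T) :
    closure s = ⋂₀ {Y | Y ∈ B ∧ s ⊆ Y} := by
  refine subset_antisymm (subset_sInter ?_) fun x hx ↦ hB.mem_closure_iff.2 ?_
  · rintro Y ⟨hY, hsY⟩
    exact closure_minimal hsY (isOpen_compl_iff.1 (hB.isOpen (hcompl Y hY)))
  · intro o ho hxo
    by_contra hdisj
    have hso : s ⊆ oᶜ := fun y hy hyo ↦ hdisj ⟨y, hyo, hy⟩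
    exact hx oᶜ ⟨hcompl o ho, hso⟩ hxo

/-- For a field of sets `P` on `T`, in the topology generated by `P`,
`⊔Z = ⋂{Y ∈ P : ⋃Z ⊆ Y}` is the closure of `⋃Z`. -/
theorem sqcup_eq_closure {T : Type*} (P : Set (Set T)) (hne : P.Nonempty)
    (hcompl : ∀ Y ∈ P, Yᶜ ∈ P) (hinter : ∀ Y ∈ P, ∀ W ∈ P, Y ∩ W ∈ P) :
    ∀ Z : Set (Set T),
      ⋂₀ {Y | Y ∈ P ∧ ⋃₀ Z ⊆ Y} =
        @closure T (TopologicalSpace.generateFrom P) (⋃₀ Z) := by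
  intro Z
  let _ : TopologicalSpace T := generateFrom P
  have hB : IsTopologicalBasis P :=
    isTopologicalBasis_generateFrom_of_inter_mem
      (univ_mem_of_compl_mem_of_inter_mem hne hcompl hinter) hinter
  exact (hB.closure_eq_sInter_of_compl_mem hcompl _).symm
end

section
/- (Validity of the Dedekind completeness axiom □(Gφ→PGφ)→(Gφ→Hφ) over real time.) For every subset X of ℝ, define G X = {t ∈ ℝ : ∀ s, t < s → s ∈ X} and H X = {t ∈ ℝ : ∀ s, s < t → s ∈ X}. If every t ∈ G X has some u < t with u ∈ G X, then G X ⊆ H X. -/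
/-! If `s < t` with `t ∈ G X` but `s ∉ X`, then `G X` is a nonempty up-set bounded below by `s`.
By completeness its infimum `m` exists, and every point above `m` lies above some point of `G X`,
so `m ∈ G X` is the least element of `G X`; the hypothesis then yields a point of `G X` below `m`. -/

variable {α : Type*}

/-- The paper's `[<]X`: the instants after which `X` always holds. -/
def alwaysAfter [LT α] (X : Set α) : Set α := {t | ∀ s, t < s → s ∈ X}

/-- The paper's `[>]X`: the instants before which `X` has always held. -/
def alwaysBefore [LT α] (X : Set α) : Set α := {t | ∀ s, s < t → s ∈ X}

section ConditionallyCompleteLinearOrder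

variable [ConditionallyCompleteLinearOrder α] {X : Set α}

theorem le_of_mem_alwaysAfter_of_notMem {s u : α} (hu : u ∈ alwaysAfter X) (hs : s ∉ X) :
    s ≤ u :=
  le_of_not_gt fun hus => hs (hu s hus)

theorem csInf_mem_alwaysAfter (hne : (alwaysAfter X).Nonempty) :
    sInf (alwaysAfter X) ∈ alwaysAfter X := by
  intro v hv
  obtain ⟨u, hu, huv⟩ := exists_lt_of_csInf_lt hne hv
  exact hu v huv

theorem alwaysAfter_subset_alwaysBefore
    (h : ∀ t ∈ alwaysAfter X, ∃ u, u < t ∧ u ∈ alwaysAfter X) :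
    alwaysAfter X ⊆ alwaysBefore X := by
  intro t ht s hst
  by_contra hs
  have hbdd : BddBelow (alwaysAfter X) := ⟨s, fun u hu => le_of_mem_alwaysAfter_of_notMem hu hs⟩
  obtain ⟨u, hu_lt, hu⟩ := h _ (csInf_mem_alwaysAfter ⟨t, ht⟩)
  exact (csInf_le hbdd hu).not_gt hu_lt

end ConditionallyCompleteLinearOrder

/-- Validity of the Dedekind completeness axiom over real time:
if every `t ∈ G X` has some `u < t` with `u ∈ G X`, then `G X ⊆ H X`,
where `G X = {t | ∀ s, t < s → s ∈ X}` and `H X = {t | ∀ s, s < t → s ∈ X}`. -/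
theorem dedekind_axiom_real (X : Set ℝ)
    (h : ∀ t ∈ {t : ℝ | ∀ s, t < s → s ∈ X},
      ∃ u, u < t ∧ u ∈ {t : ℝ | ∀ s, t < s → s ∈ X}) :
    {t : ℝ | ∀ s, t < s → s ∈ X} ⊆ {t : ℝ | ∀ s, s < t → s ∈ X} :=
  alwaysAfter_subset_alwaysBefore h
end

section
/- (Validity of the mirror-image Dedekind completeness axiom over real time.) For every subset X of ℝ, define G X = {t ∈ ℝ : ∀ s, t < s → s ∈ X} and H X = {t ∈ ℝ : ∀ s, s < t → s ∈ X}. If every t ∈ H X has some u > t with u ∈ H X, then H X ⊆ G X. -/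
/-!
The set `H X` is a union of initial rays, so in a conditionally complete order it contains its
own supremum. If it has no greatest element it is therefore unbounded, and then every time lies
below some member of `H X`; that is, `X` is everything.
-/

namespace Set

variable {α : Type*} [ConditionallyCompleteLinearOrder α]

def hasAlwaysBeen (X : Set α) : Set α := {t | ∀ s, s < t → s ∈ X}

theorem csSup_mem_hasAlwaysBeen {X : Set α} (hne : (hasAlwaysBeen X).Nonempty) :
    sSup (hasAlwaysBeen X) ∈ hasAlwaysBeen X := by
  intro s hs
  obtain ⟨u, hu, hsu⟩ := exists_lt_of_lt_csSup hne hs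
  exact hu s hsu

theorem not_bddAbove_hasAlwaysBeen {X : Set α} (hne : (hasAlwaysBeen X).Nonempty)
    (hnoMax : ∀ t ∈ hasAlwaysBeen X, ∃ u, t < u ∧ u ∈ hasAlwaysBeen X) :
    ¬BddAbove (hasAlwaysBeen X) := by
  intro hbdd
  obtain ⟨u, hsup_lt, hu⟩ := hnoMax _ (csSup_mem_hasAlwaysBeen hne)
  exact (le_csSup hbdd hu).not_gt hsup_lt

theorem eq_univ_of_not_bddAbove_hasAlwaysBeen {X : Set α}
    (hunbdd : ¬BddAbove (hasAlwaysBeen X)) : X = univ := by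
  refine eq_univ_of_forall fun s => ?_
  obtain ⟨u, hu, hsu⟩ := not_bddAbove_iff.mp hunbdd s
  exact hu s hsu

end Set

/-- Validity of the mirror-image Dedekind completeness axiom over real
time: if every `t ∈ H X` has some `u > t` with `u ∈ H X`, then `H X ⊆ G X`. -/
theorem dedekind_axiom_mirror_real (X : Set ℝ)
    (h : ∀ t ∈ {t : ℝ | ∀ s, s < t → s ∈ X},
      ∃ u, t < u ∧ u ∈ {t : ℝ | ∀ s, s < t → s ∈ X}) :
    {t : ℝ | ∀ s, s < t → s ∈ X} ⊆ {t : ℝ | ∀ s, t < s → s ∈ X} := by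
  intro t ht s _
  have hX : X = Set.univ :=
    Set.eq_univ_of_not_bddAbove_hasAlwaysBeen (Set.not_bddAbove_hasAlwaysBeen ⟨t, ht⟩ h)
  exact hX ▸ Set.mem_univ s
end

section
/- (Failure of the Dedekind completeness axiom over rational time.) There exists a subset X of ℚ such that, defining G X = {t ∈ ℚ : ∀ s, t < s → s ∈ X} and H X = {t ∈ ℚ : ∀ s, s < t → s ∈ X}, every t ∈ G X has some u < t with u ∈ G X, yet G X is not contained in H X. -/
/-! Take `X = {q ∈ ℚ | √2 < q}`. A rational `t` lies in `G X` iff `√2 ≤ t`, so, `√2` being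
irrational, `G X = X`, which has no least element by density of `ℚ` in `ℝ`. Yet `2 ∈ G X`
while `0 < 2` lies outside `X`, so `2 ∉ H X`. -/

theorem Rat.forall_lt_imp_lt_cast_iff {r : ℝ} {t : ℚ} :
    (∀ s : ℚ, t < s → r < s) ↔ r ≤ t := by
  refine ⟨fun h => not_lt.1 fun htr => ?_, fun hrt s hts => hrt.trans_lt (by exact_mod_cast hts)⟩
  obtain ⟨s, hts, hsr⟩ := exists_rat_btwn htr
  exact (h s (by exact_mod_cast hts)).not_gt hsr

/-- Failure of the Dedekind completeness axiom over rational time: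
there is `X ⊆ ℚ` such that every `t ∈ G X` has some `u < t` with `u ∈ G X`,
yet `G X ⊄ H X`. -/
theorem dedekind_axiom_fails_rat :
    ∃ X : Set ℚ,
      (∀ t ∈ {t : ℚ | ∀ s, t < s → s ∈ X},
        ∃ u, u < t ∧ u ∈ {t : ℚ | ∀ s, t < s → s ∈ X}) ∧
      ¬ ({t : ℚ | ∀ s, t < s → s ∈ X} ⊆ {t : ℚ | ∀ s, s < t → s ∈ X}) := by
  refine ⟨{q : ℚ | √2 < q}, fun t ht => ?_, fun hGH => ?_⟩
  · have hlt : √2 < t :=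
      (Rat.forall_lt_imp_lt_cast_iff.1 ht).lt_of_ne (irrational_sqrt_two.ne_rat t)
    obtain ⟨u, hu, hut⟩ := exists_rat_btwn hlt
    exact ⟨u, by exact_mod_cast hut, Rat.forall_lt_imp_lt_cast_iff.2 hu.le⟩
  · have h2 : (2 : ℚ) ∈ {t : ℚ | ∀ s, t < s → √2 < s} :=
      Rat.forall_lt_imp_lt_cast_iff.2 (by rw [Real.sqrt_le_left] <;> norm_num)
    have h0 : √2 < ((0 : ℚ) : ℝ) := hGH h2 0 two_pos
    exact (Real.sqrt_nonneg 2).not_gt (by exact_mod_cast h0)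
end

section
/- For all real numbers r < s, there exist functions a, b : ℚ → ℝ such that for every rational q one has r < a q, a q < b q, and b q < s, and for all rationals q < q' one has b q < a q'. (Thus the open intervals (a q, b q) form a ℚ-indexed family of pairwise disjoint nonempty open subintervals of (r, s), whose ordering by 'lying strictly to the left of' is order-isomorphic to (ℚ, <).) -/
/-!
The countable linear order `ℚ ×ₗ Bool` embeds, by Cantor's back-and-forth argument, into the
dense order `(r, s)`; the images of `(q, false) < (q, true) < (q', false)` for `q < q'` are the
endpoints `a q < b q < a q'`.
-/

theorem exists_ordered_disjoint_intervals (α β : Type*) [LinearOrder α] [Countable α]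
    [LinearOrder β] [DenselyOrdered β] [Nontrivial β] :
    ∃ a b : α → β, (∀ q, a q < b q) ∧ ∀ q q', q < q' → b q < a q' := by
  have : Countable (α ×ₗ Bool) := inferInstanceAs (Countable (α × Bool))
  obtain ⟨e⟩ := Order.embedding_from_countable_to_dense (α ×ₗ Bool) β
  refine ⟨fun q => e (toLex (q, false)), fun q => e (toLex (q, true)), fun q => ?_,
    fun q q' h => ?_⟩
  · exact e.strictMono (Prod.Lex.toLex_lt_toLex.mpr (.inr ⟨rfl, Bool.false_lt_true⟩))
  · exact e.strictMono (Prod.Lex.toLex_lt_toLex.mpr (.inl h))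

/-- In any open interval `(r, s)` of `ℝ` there is a `ℚ`-indexed family
of pairwise disjoint nonempty open subintervals `(a q, b q)` ordered as `(ℚ, <)`. -/
theorem rationally_indexed_intervals (r s : ℝ) (hrs : r < s) :
    ∃ a b : ℚ → ℝ,
      (∀ q : ℚ, r < a q ∧ a q < b q ∧ b q < s) ∧
      (∀ q q' : ℚ, q < q' → b q < a q') := by
  have : Nontrivial (Set.Ioo r s) :=
    Set.nontrivial_coe_sort.mpr (Set.Ioo_infinite hrs).nontrivial
  obtain ⟨a, b, hab, hba⟩ := exists_ordered_disjoint_intervals ℚ (Set.Ioo r s)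
  exact ⟨fun q => a q, fun q => b q, fun q => ⟨(a q).2.1, hab q, (b q).2.2⟩, hba⟩
end
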